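/- Let q be even, let 𝒜 have size q, let A₀ ⊆ 𝒜 with |A₀| = q/2 and A₁ = 𝒜∖A₀. Let C = {0001, 0011, 0010, 0110, 1110, 1100, 1101, 1001} ⊆ {0,1}^4 and let D = ⋃_{(x₁,x₂,x₃,x₄) ∈ C} A_{x₁} × A_{x₂} × A_{x₃} × A_{x₄} ⊆ 𝒜^4. Then (D, D̄) is an equitable 2-partition of the Hamming graph H(4,q) whose quotient matrix S satisfies S₁₁ − S₂₁ = λ₂(4,q) = 2q − 4. -/

import Mathlib

/-! Write `f : 𝒜 → Fin 2` for `a ↦ [a ∉ A₀]`, whose two fibres have `m = q/2` elements; `D` is the preimage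
of the 8-cycle `C ⊆ {0,1}⁴` under `x ↦ f ∘ x`. A neighbour of `x` changes one coordinate `i`, either inside
its fibre (`m - 1` choices, same image) or into another fibre (`m` choices for each neighbour of `f ∘ x`
obtained by changing coordinate `i`). So an equitable partition of `H(n,2)` with quotient `S` pulls back to
one of `H(n,q)` with quotient `m S + (m - 1) n I`. Every vertex of the 4-cube has exactly two neighbours on
the cycle `C`, so `S = 2J`, and `S₁₁ - S₂₁ = 4 (m - 1) = 2q - 4`. -/

/-- `(C, Cᶜ)` is an equitable 2-partition of the graph `G` (both cells nonempty) with
quotient matrix `S`: every vertex of `C` has exactly `S 0 0` neighbors in `C` and `S 0 1`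
neighbors in `Cᶜ`, and every vertex of `Cᶜ` has exactly `S 1 0` neighbors in `C` and
`S 1 1` neighbors in `Cᶜ`. -/
def IsEquitable2 {V : Type*} (G : SimpleGraph V) (C : Set V)
    (S : Matrix (Fin 2) (Fin 2) ℤ) : Prop :=
  C.Nonempty ∧ Cᶜ.Nonempty ∧
    (∀ x ∈ C, ((G.neighborSet x ∩ C).ncard : ℤ) = S 0 0 ∧
      ((G.neighborSet x ∩ Cᶜ).ncard : ℤ) = S 0 1) ∧
    (∀ x ∈ Cᶜ, ((G.neighborSet x ∩ C).ncard : ℤ) = S 1 0 ∧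
      ((G.neighborSet x ∩ Cᶜ).ncard : ℤ) = S 1 1)

/-- The Hamming graph `H(n,q)` on the vertex set `𝒜ⁿ` (where `|𝒜| = q`): two vertices are
adjacent iff they differ in exactly one coordinate. -/
def hammingGraph (n : ℕ) (𝒜 : Type*) [DecidableEq 𝒜] : SimpleGraph (Fin n → 𝒜) where
  Adj x y := hammingDist x y = 1
  symm := ⟨fun x y h => (hammingDist_comm y x).trans h⟩
  loopless := ⟨fun x h => by simp [hammingDist_self] at h⟩

/-- The code `C = {0001, 0011, 0010, 0110, 1110, 1100, 1101, 1001} ⊆ {0,1}⁴`. -/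
def cycleCode : Set (Fin 4 → Fin 2) :=
  {![0, 0, 0, 1], ![0, 0, 1, 1], ![0, 0, 1, 0], ![0, 1, 1, 0],
   ![1, 1, 1, 0], ![1, 1, 0, 0], ![1, 1, 0, 1], ![1, 0, 0, 1]}

open Finset Function

section HammingNeighbors

variable {ι 𝒜 : Type*} [Fintype ι] [DecidableEq 𝒜]

lemma hammingDist_eq_one_iff {x y : ι → 𝒜} :
    hammingDist x y = 1 ↔ ∃ i, x i ≠ y i ∧ ∀ j ≠ i, x j = y j := by
  simp only [hammingDist, card_eq_one, Finset.ext_iff, mem_filter, mem_univ, true_and,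
    mem_singleton]
  exact ⟨fun ⟨i, hi⟩ => ⟨i, (hi i).2 rfl, fun j hj => not_not.1 (mt (hi j).1 hj)⟩,
    fun ⟨i, hi, hj⟩ => ⟨i, fun j => ⟨fun h => not_not.1 (mt (hj j) h), fun h => h ▸ hi⟩⟩⟩

variable [DecidableEq ι] [Fintype 𝒜]

lemma filter_hammingDist_eq_one (x : ι → 𝒜) (P : (ι → 𝒜) → Prop) [DecidablePred P] :
    ({y | hammingDist x y = 1 ∧ P y} : Finset (ι → 𝒜))
      = univ.biUnion fun i => ({a | a ≠ x i ∧ P (update x i a)} : Finset 𝒜).image (update x i) := by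
  ext y
  simp only [mem_filter, mem_univ, true_and, mem_biUnion, mem_image, hammingDist_eq_one_iff]
  constructor
  · rintro ⟨⟨i, hi, hrest⟩, hP⟩
    have hy : update x i (y i) = y := by
      funext j
      rcases eq_or_ne j i with rfl | hj
      · simp
      · simp [update_of_ne hj, hrest j hj]
    exact ⟨i, y i, ⟨Ne.symm hi, by rwa [hy]⟩, hy⟩
  · rintro ⟨i, a, ⟨ha, hPa⟩, rfl⟩
    exact ⟨⟨i, by simpa using Ne.symm ha, fun j hj => by simp [update_of_ne hj]⟩, hPa⟩

lemma card_filter_hammingDist_eq_one (x : ι → 𝒜) (P : (ι → 𝒜) → Prop) [DecidablePred P] :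
    #{y | hammingDist x y = 1 ∧ P y} = ∑ i, #{a | a ≠ x i ∧ P (update x i a)} := by
  rw [filter_hammingDist_eq_one, card_biUnion]
  · exact sum_congr rfl fun i _ => card_image_of_injective _ (update_injective x i)
  · intro i _ j _ hij
    simp only [Function.onFun, disjoint_left, mem_image, mem_filter, mem_univ, true_and]
    rintro y ⟨a, ⟨ha, _⟩, rfl⟩ ⟨b, -, hb⟩
    exact ha (by simpa [update_of_ne hij] using (congrFun hb i).symm)

end HammingNeighbors

lemma card_filter_ne_add_ite {α : Type*} [Fintype α] [DecidableEq α] (p : α → Prop)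
    [DecidablePred p] (v : α) : #{a | a ≠ v ∧ p a} + (if p v then 1 else 0) = #{a | p a} := by
  rw [← filter_filter, filter_ne', filter_erase]
  split_ifs with h
  · exact card_erase_add_one (by simpa using h)
  · simp [h]

section Fibres

variable {α β : Type*} [Fintype α] [Fintype β] [DecidableEq β] {f : α → β} {m : ℕ}

lemma card_filter_comp_of_card_fiber (hf : ∀ b, #{a | f a = b} = m) (Q : β → Prop)
    [DecidablePred Q] : #{a | Q (f a)} = m * #{b | Q b} := by
  rw [card_eq_sum_card_fiberwise (f := f) (t := {b | Q b}) fun a ha => by simpa using ha,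
    mul_comm, ← smul_eq_mul, ← sum_const]
  refine sum_congr rfl fun b hb => ?_
  rw [filter_filter, ← hf b]
  congr 1
  exact filter_congr fun a _ => ⟨And.right, fun h => ⟨h ▸ (mem_filter.1 hb).2, h⟩⟩

variable [DecidableEq α]

lemma card_filter_ne_comp_add_ite (hf : ∀ b, #{a | f a = b} = m) (Q : β → Prop)
    [DecidablePred Q] (v : α) :
    #{a | a ≠ v ∧ Q (f a)} + (if Q (f v) then 1 else 0)
      = m * (#{b | b ≠ f v ∧ Q b} + if Q (f v) then 1 else 0) := by
  rw [card_filter_ne_add_ite (fun a => Q (f a)), card_filter_ne_add_ite,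
    card_filter_comp_of_card_fiber hf]

end Fibres

section HammingGraph

variable {n : ℕ} {𝒜 β : Type*} [Fintype 𝒜] [DecidableEq 𝒜]

lemma hammingGraph_ncard_neighborSet_inter (x : Fin n → 𝒜) (E : Set (Fin n → 𝒜))
    [DecidablePred (· ∈ E)] :
    ((hammingGraph n 𝒜).neighborSet x ∩ E).ncard = ∑ i, #{a | a ≠ x i ∧ update x i a ∈ E} := by
  rw [← card_filter_hammingDist_eq_one, ← Set.ncard_coe_finset]
  congr 1
  ext y
  simp [hammingGraph]

variable [Fintype β] [DecidableEq β] {f : 𝒜 → β} {m : ℕ}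

lemma hammingGraph_ncard_neighborSet_inter_preimage (hf : ∀ b, #{a | f a = b} = m)
    (x : Fin n → 𝒜) (E : Set (Fin n → β)) [DecidablePred (· ∈ E)] :
    ((hammingGraph n 𝒜).neighborSet x ∩ (f ∘ ·) ⁻¹' E).ncard + (if f ∘ x ∈ E then n else 0)
      = m * (((hammingGraph n β).neighborSet (f ∘ x) ∩ E).ncard
        + if f ∘ x ∈ E then n else 0) := by
  have hcoord (i : Fin n) : #{a | a ≠ x i ∧ update (f ∘ x) i (f a) ∈ E}
      + (if f ∘ x ∈ E then 1 else 0)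
      = m * (#{b | b ≠ (f ∘ x) i ∧ update (f ∘ x) i b ∈ E} + if f ∘ x ∈ E then 1 else 0) := by
    have := card_filter_ne_comp_add_ite hf (fun b => update (f ∘ x) i b ∈ E) (x i)
    rwa [← comp_apply (f := f) (g := x), update_eq_self] at this
  have : DecidablePred (· ∈ (f ∘ ·) ⁻¹' E) := fun y => inferInstanceAs (Decidable (f ∘ y ∈ E))
  rw [hammingGraph_ncard_neighborSet_inter, hammingGraph_ncard_neighborSet_inter]
  simp only [Set.mem_preimage, comp_update]
  simpa only [sum_add_distrib, ← mul_sum, sum_ite_irrel, sum_const, card_univ, Fintype.card_fin,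
    smul_eq_mul, mul_one, mul_zero] using sum_congr rfl fun i (_ : i ∈ univ) => hcoord i

lemma IsEquitable2.hammingGraph_comap (hm : 0 < m) (hf : ∀ b, #{a | f a = b} = m)
    {C : Set (Fin n → β)} {S : Matrix (Fin 2) (Fin 2) ℤ}
    (hC : IsEquitable2 (hammingGraph n β) C S) :
    IsEquitable2 (hammingGraph n 𝒜) ((f ∘ ·) ⁻¹' C) ((m : ℤ) • S + (((m : ℤ) - 1) * n) • 1) := by
  classical
  obtain ⟨hne, hcne, hin, hout⟩ := hC
  have hsurj : Surjective (f ∘ · : (Fin n → 𝒜) → Fin n → β) :=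
    Surjective.comp_left fun b => by
      obtain ⟨a, ha⟩ := card_pos.1 (hf b ▸ hm)
      exact ⟨a, (mem_filter.1 ha).2⟩
  have hcount (x : Fin n → 𝒜) (E : Set (Fin n → β)) :
      (((hammingGraph n 𝒜).neighborSet x ∩ (f ∘ ·) ⁻¹' E).ncard : ℤ)
        = m * ((hammingGraph n β).neighborSet (f ∘ x) ∩ E).ncard
          + if f ∘ x ∈ E then ((m : ℤ) - 1) * n else 0 := by
    have := hammingGraph_ncard_neighborSet_inter_preimage hf x E
    split_ifs at this ⊢ <;> · zify at this; linarith
  refine ⟨hne.preimage hsurj, (hcne.preimage hsurj : ((f ∘ ·) ⁻¹' Cᶜ).Nonempty), fun x hx => ?_,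
    fun x hx => ?_⟩
  · obtain ⟨h₀₀, h₀₁⟩ := hin (f ∘ x) hx
    rw [← Set.preimage_compl, hcount, hcount, h₀₀, h₀₁]
    simp only [Matrix.add_apply, Matrix.smul_apply, Matrix.one_apply, smul_eq_mul]
    simp [show f ∘ x ∈ C from hx]
  · obtain ⟨h₁₀, h₁₁⟩ := hout (f ∘ x) hx
    rw [← Set.preimage_compl, hcount, hcount, h₁₀, h₁₁]
    simp only [Matrix.add_apply, Matrix.smul_apply, Matrix.one_apply, smul_eq_mul]
    simp [show f ∘ x ∉ C from hx]

end HammingGraph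

lemma card_filter_ite_mem_eq {α : Type*} [Fintype α] (s : Set α) [DecidablePred (· ∈ s)]
    (hs : 2 * s.ncard = Fintype.card α) (b : Fin 2) :
    #{a | (if a ∈ s then 0 else 1 : Fin 2) = b} = s.ncard := by
  have hmem : #{a | a ∈ s} = s.ncard := by
    rw [Set.ncard_eq_toFinset_card', Set.toFinset_card, ← Fintype.card_subtype]
  have hnot : #{a | a ∉ s} = s.ncard := by
    have := card_filter_add_card_filter_not (s := univ) (· ∈ s)
    rw [card_univ] at this
    omega
  fin_cases b <;> simpa

instance : DecidablePred (· ∈ cycleCode) := fun c =>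
  decidable_of_iff (c = ![0,0,0,1] ∨ c = ![0,0,1,1] ∨ c = ![0,0,1,0] ∨ c = ![0,1,1,0] ∨
    c = ![1,1,1,0] ∨ c = ![1,1,0,0] ∨ c = ![1,1,0,1] ∨ c = ![1,0,0,1])
    (by simp [cycleCode])

lemma isEquitable2_cycleCode :
    IsEquitable2 (hammingGraph 4 (Fin 2)) cycleCode (Matrix.of fun _ _ => 2) := by
  have hin : ∀ c : Fin 4 → Fin 2, ∑ i, #{b | b ≠ c i ∧ update c i b ∈ cycleCode} = 2 := by
    decide
  have hout : ∀ c : Fin 4 → Fin 2, ∑ i, #{b | b ≠ c i ∧ update c i b ∈ cycleCodeᶜ} = 2 := by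
    decide
  refine ⟨⟨![0, 0, 0, 1], by simp [cycleCode]⟩, ⟨0, by decide⟩, fun c _ => ?_, fun c _ => ?_⟩ <;>
    simp only [hammingGraph_ncard_neighborSet_inter, hin, hout] <;> simp

theorem stmt10_general {𝒜 : Type*} [Fintype 𝒜] [DecidableEq 𝒜] (q : ℕ)
    (hq : Fintype.card 𝒜 = q) (hq2 : 2 ≤ q)
    (A₀ : Set 𝒜) [DecidablePred (· ∈ A₀)] (hA₀ : 2 * A₀.ncard = q) :
    ∃ S : Matrix (Fin 2) (Fin 2) ℤ,
      IsEquitable2 (hammingGraph 4 𝒜)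
        {x : Fin 4 → 𝒜 | (fun i => if x i ∈ A₀ then (0 : Fin 2) else 1) ∈ cycleCode} S ∧
      S 0 0 - S 1 0 = 2 * (q : ℤ) - 4 := by
  have hm : 0 < A₀.ncard := by omega
  have hf := card_filter_ite_mem_eq A₀ (hA₀.trans hq.symm)
  refine ⟨_, isEquitable2_cycleCode.hammingGraph_comap hm hf, ?_⟩
  simp only [Matrix.add_apply, Matrix.smul_apply, Matrix.one_apply, Matrix.of_apply, smul_eq_mul]
  simp
  omega

/-- Construction B: Let `q` be even, `|𝒜| = q`, `A₀ ⊆ 𝒜` with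
`|A₀| = q/2` and `A₁ = 𝒜 ∖ A₀`. Let `D = ⋃_{c ∈ C} A_{c₁} × A_{c₂} × A_{c₃} × A_{c₄}`,
i.e. `D = {x : the pattern of membership of the x_i in A₀ gives an element of C}`.
Then `(D, Dᶜ)` is an equitable 2-partition of `H(4,q)` whose quotient matrix `S`
satisfies `S₁₁ - S₂₁ = λ₂(4,q) = 2q - 4`. -/
theorem stmt10 {𝒜 : Type*} [Fintype 𝒜] [DecidableEq 𝒜] (q : ℕ)
    (hq : Fintype.card 𝒜 = q) (hqeven : Even q) (hq2 : 2 ≤ q)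
    (A₀ : Set 𝒜) [DecidablePred (· ∈ A₀)] (hA₀ : 2 * A₀.ncard = q) :
    ∃ S : Matrix (Fin 2) (Fin 2) ℤ,
      IsEquitable2 (hammingGraph 4 𝒜)
        {x : Fin 4 → 𝒜 | (fun i => if x i ∈ A₀ then (0 : Fin 2) else 1) ∈ cycleCode} S ∧
      S 0 0 - S 1 0 = 2 * (q : ℤ) - 4 :=
  stmt10_general q hq hq2 A₀ hA₀
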